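/- Prescribed eigenvalue of the Gauss–Radau tridiagonal matrix: Let T̂_k be a k×k real symmetric tridiagonal matrix (k ≥ 2) with subdiagonal entries β_1, …, β_{k−1} all nonzero, let T̂_{k−1} be its leading principal (k−1)×(k−1) block, and let a ∈ ℝ be such that T̂_{k−1} − aI is invertible. Let δ ∈ ℝ^{k−1} solve (T̂_{k−1} − aI) δ = β_{k−1}² e_{k−1}, and let T_k^{GR} be the matrix obtained from T̂_k by replacing its (k,k) entry with a + δ_{k−1}. Then a is an eigenvalue of T_k^{GR}. -/
import Mathlib


open Matrix

/-- The leading principal `(k-1) × (k-1)` block of a `k × k` matrix. -/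
def leadingBlock {k : ℕ} (T : Matrix (Fin k) (Fin k) ℝ) :
    Matrix (Fin (k - 1)) (Fin (k - 1)) ℝ :=
  T.submatrix (fun i => Fin.castLE (Nat.sub_le k 1) i) (fun i => Fin.castLE (Nat.sub_le k 1) i)

/-- **Prescribed eigenvalue of the Gauss–Radau tridiagonal matrix**: replacing the `(k,k)`
entry of a real symmetric tridiagonal matrix `T̂_k` (with nonzero subdiagonal) by
`a + δ_{k-1}`, where `(T̂_{k-1} - aI) δ = β_{k-1}² e_{k-1}`, produces a matrix having `a`
as an eigenvalue. -/
theorem gauss_radau_prescribed_eigenvalue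
    {k : ℕ} (hk : 2 ≤ k)
    (T : Matrix (Fin k) (Fin k) ℝ) (hsymm : T.IsHermitian)
    (htri : ∀ i j : Fin k, ((i : ℕ) + 1 < (j : ℕ) ∨ (j : ℕ) + 1 < (i : ℕ)) → T i j = 0)
    (hsub : ∀ (i : ℕ) (h : i + 1 < k), T ⟨i + 1, h⟩ ⟨i, by omega⟩ ≠ 0)
    (a : ℝ)
    (hinv : IsUnit (leadingBlock T - a • (1 : Matrix (Fin (k - 1)) (Fin (k - 1)) ℝ)))
    (δ : Fin (k - 1) → ℝ)
    (hδ : (leadingBlock T - a • (1 : Matrix (Fin (k - 1)) (Fin (k - 1)) ℝ)) *ᵥ δ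
        = (T ⟨k - 1, by omega⟩ ⟨k - 2, by omega⟩) ^ 2 •
            (Pi.single (⟨k - 2, by omega⟩ : Fin (k - 1)) 1 : Fin (k - 1) → ℝ))
    (TGR : Matrix (Fin k) (Fin k) ℝ)
    (hTGRdef : TGR = Matrix.of fun i j : Fin k =>
        if i = (⟨k - 1, by omega⟩ : Fin k) ∧ j = (⟨k - 1, by omega⟩ : Fin k)
          then a + δ ⟨k - 2, by omega⟩ else T i j) :
    a ∈ spectrum ℝ TGR := by
  obtain ⟨m, rfl⟩ : ∃ m, k = m + 2 := ⟨k - 2, by omega⟩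
  set β : ℝ := T ⟨m+1, by omega⟩ ⟨m, by omega⟩ with hβ
  have hβ0 : β ≠ 0 := hsub m (by omega)
  have hδ2 : (leadingBlock T - a • (1 : Matrix (Fin (m+2-1)) (Fin (m+2-1)) ℝ)) *ᵥ δ
      = β ^ 2 • (Pi.single (Fin.last m) 1 : Fin (m+2-1) → ℝ) := hδ
  have hT2 : TGR = Matrix.of fun i j : Fin (m+2) =>
      if i = Fin.last (m+1) ∧ j = Fin.last (m+1) then a + δ (Fin.last m) else T i j := hTGRdef
  -- the eigenvector
  set v : Fin (m+2) → ℝ := Fin.snoc (fun j : Fin (m+1) => -δ j) β with hv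
  have hvlast : v (Fin.last (m+1)) = β := Fin.snoc_last _ _
  have hvcast : ∀ j : Fin (m+1), v j.castSucc = -δ j := fun j => Fin.snoc_castSucc _ _ j
  have hv0 : v ≠ 0 := by
    intro h
    apply hβ0
    rw [← hvlast, h]; rfl
  -- componentwise hδ
  have hδ' : ∀ i : Fin (m+1),
      (∑ j : Fin (m+1), T i.castSucc j.castSucc * δ j) - a * δ i
        = β ^ 2 * (if i = Fin.last m then 1 else 0) := by
    intro i
    have h1 := congrFun hδ2 i
    simp only [Matrix.mulVec, Matrix.sub_apply, Matrix.smul_apply, Matrix.one_apply,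
      dotProduct, leadingBlock, Matrix.submatrix_apply, Pi.smul_apply, Pi.single_apply,
      smul_eq_mul] at h1
    have h2 : ∀ x : Fin (m+1), Fin.castLE (Nat.sub_le (m+2) 1) x = x.castSucc := fun _ => rfl
    simp only [h2, sub_mul, ite_mul, one_mul, zero_mul, Finset.sum_sub_distrib,
      Finset.sum_ite_eq, Finset.mem_univ, if_true, mul_ite, mul_one, mul_zero] at h1 ⊢
    exact h1
  -- symmetry: entries T i (last)
  have hTsymm : ∀ i j : Fin (m+2), T i j = T j i := by
    intro i j
    rw [← hsymm.apply j i]; rfl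
  have hTcol : ∀ i : Fin (m+1), T i.castSucc (Fin.last (m+1))
      = if i = Fin.last m then β else 0 := by
    intro i
    by_cases hi : i = Fin.last m
    · subst hi
      rw [if_pos rfl, hTsymm, hβ]
      congr 1
    · rw [if_neg hi]
      apply htri
      left
      have : (i : ℕ) < m := by
        have := i.isLt
        rcases Nat.lt_succ_iff_lt_or_eq.mp this with h | h
        · exact h
        · exact absurd (Fin.ext h) hi
      simpa using by omega
  -- kernel equation
  have hker : (a • (1 : Matrix (Fin (m+2)) (Fin (m+2)) ℝ) - TGR) *ᵥ v = 0 := by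
    funext i
    rw [Pi.zero_apply]
    have hexp : ((a • (1 : Matrix (Fin (m+2)) (Fin (m+2)) ℝ) - TGR) *ᵥ v) i
        = a * v i - ∑ j : Fin (m+2), TGR i j * v j := by
      simp only [Matrix.mulVec, dotProduct, Matrix.sub_apply, Matrix.smul_apply,
        Matrix.one_apply, smul_eq_mul, sub_mul, ite_mul, one_mul, zero_mul,
        Finset.sum_sub_distrib, Finset.sum_ite_eq, Finset.mem_univ, if_true, mul_ite,
        mul_one, mul_zero]
    rw [hexp]
    rw [Fin.sum_univ_castSucc (fun j => TGR i j * v j)]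
    induction i using Fin.lastCases with
    | last =>
      have hTd : TGR (Fin.last (m+1)) (Fin.last (m+1)) = a + δ (Fin.last m) := by
        rw [hT2]; simp
      have hTrow : ∀ j : Fin (m+1), TGR (Fin.last (m+1)) j.castSucc
          = if j = Fin.last m then β else 0 := by
        intro j
        have hne : ¬ (j.castSucc = Fin.last (m+1)) := by
          simp [Fin.ext_iff, Fin.last]
          omega
        rw [hT2]
        simp only [Matrix.of_apply, hne, and_false, if_false]
        rw [hTsymm]
        exact hTcol j
      simp only [hvlast, hTd, hvcast, hTrow, ite_mul, zero_mul, Finset.sum_ite_eq',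
        Finset.mem_univ, if_true]
      ring
    | cast i =>
      have hne : ¬ (i.castSucc = Fin.last (m+1)) := by
        simp [Fin.ext_iff, Fin.last]
        omega
      have hTrow : ∀ j : Fin (m+2), TGR i.castSucc j = T i.castSucc j := by
        intro j
        rw [hT2]
        simp [hne]
      simp only [hTrow, hvcast, hvlast, hTcol i, ite_mul, zero_mul]
      have := hδ' i
      by_cases hi : i = Fin.last m <;>
        simp only [hi, if_pos, if_neg, if_true, if_false] at this ⊢ <;>
        · simp only [mul_neg, Finset.sum_neg_distrib]
          nlinarith [this]
  -- conclude
  rw [spectrum.mem_iff]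
  intro hu
  rw [Algebra.algebraMap_eq_smul_one] at hu
  have hdet := (Matrix.isUnit_iff_isUnit_det _).mp hu
  have hzero : (a • (1 : Matrix (Fin (m+2)) (Fin (m+2)) ℝ) - TGR).det = 0 :=
    Matrix.exists_mulVec_eq_zero_iff.mp ⟨v, hv0, hker⟩
  rw [hzero] at hdet
  exact hdet.ne_zero rfl
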